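/- arXiv:1011.0220 — 2 statements merged into one kernel-verified Lean document; each statement's English description precedes it below -/
import Mathlib

section
/- Suppose every class of a partition γ satisfies the invariant that any class containing a fresh output name n! contains no other element outside N_i (i.e., E ∈ γ and n! ∈ E implies E \ {n!} ⊆ N_i). If δ and δ' are γ-κ-compatible, then the refined partition γ_{◁ δ=δ'} also satisfies this invariant. -/
inductive Name : Type
  | free : ℕ → Name
  | binder : ℕ → Name
  | restr : ℕ → Name
  | priv : ℕ → Name
  | out : ℕ → Name
  | inp : ℕ → Name
  deriving DecidableEq

def isFI : Name → Prop
  | Name.free _ => True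
  | Name.inp _ => True
  | _ => False

/-- The set N_i of fresh input names. -/
def Ninp : Set Name := {x | ∃ m, x = Name.inp m}

/-- ↔_κ : smallest reflexive symmetric relation with the two kinds of base pairs. -/
inductive NRel (prec : ℕ → ℕ → Prop) : Name → Name → Prop
  | base_fi {δ δ'} : isFI δ → isFI δ' → NRel prec δ δ'
  | base_oi {n m} : prec n m → NRel prec (Name.out n) (Name.inp m)
  | refl (δ) : NRel prec δ δ
  | symm {δ δ'} : NRel prec δ δ' → NRel prec δ' δ

/-- Invariant: any class containing a fresh output n! contains otherwise only inputs. -/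
def OutInv (γ : Set (Set Name)) : Prop :=
  ∀ E ∈ γ, ∀ n : ℕ, Name.out n ∈ E → E \ {Name.out n} ⊆ Ninp

lemma nrel_out {prec : ℕ → ℕ → Prop} {a b : Name} (h : NRel prec a b) (n : ℕ) :
    (a = Name.out n → b = Name.out n ∨ b ∈ Ninp) ∧
    (b = Name.out n → a = Name.out n ∨ a ∈ Ninp) := by
  induction h with
  | base_fi ha hb =>
    constructor <;> rintro rfl <;> simp [isFI] at *
  | base_oi hp =>
    constructor
    · rintro h; injection h with h; subst h; exact Or.inr ⟨_, rfl⟩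
    · rintro h; cases h
  | refl d => exact ⟨fun h => Or.inl h, fun h => Or.inl h⟩
  | symm _ ih => exact ⟨ih.2, ih.1⟩

/-- the invariant of Proposition 1 is preserved by a compatible refinement. -/
theorem stmt3 (prec : ℕ → ℕ → Prop)
    (γ : Set (Set Name)) (hinv : OutInv γ)
    (δ δ' : Name) (Cδ Cδ' : Set Name)
    (hCδ : Cδ ∈ γ) (hδ : δ ∈ Cδ) (hCδ' : Cδ' ∈ γ) (hδ' : δ' ∈ Cδ')
    (hcompat : ∀ n ∈ Cδ, ∀ m ∈ Cδ', NRel prec n m) :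
    OutInv ((γ \ {Cδ, Cδ'}) ∪ {Cδ ∪ Cδ'}) := by
  intro E hE n hout x hx
  rcases hE with ⟨hEγ, _⟩ | hE
  · exact hinv E hEγ n hout hx
  · simp only [Set.mem_singleton_iff] at hE
    subst hE
    obtain ⟨hxE, hxne⟩ := hx
    simp only [Set.mem_singleton_iff] at hxne
    have key : ∀ {A B : Set Name}, A ∈ γ → B ∈ γ →
        (∀ a ∈ A, ∀ b ∈ B, NRel prec a b) →
        Name.out n ∈ A → x ∈ B → x ∈ Ninp := by
      intro A B hA hB hc ho hxB
      have := (nrel_out (hc _ ho _ hxB) n).1 rfl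
      rcases this with h | h
      · exact absurd h hxne
      · exact h
    rcases hout with ho | ho <;> rcases hxE with hx | hx
    · exact hinv Cδ hCδ n ho ⟨hx, hxne⟩
    · exact key hCδ hCδ' hcompat ho hx
    · exact key hCδ' hCδ (fun a ha b hb => NRel.symm (hcompat b hb a ha)) ho hx
    · exact hinv Cδ' hCδ' n ho ⟨hx, hxne⟩
end

section
/- In a garbage-free graph, the domain of the causal clock (minus ⊥) has cardinality at most |B|: if dom(κ) \ {⊥} = (cod(I) ∩ N_o) ∪ {n! | the γ-class of n! is not a singleton}, every non-singleton γ-class containing an output name n! consists otherwise only of input names, all such input names lie in cod(I) ∩ N_i, distinct classes are disjoint, and |cod(I)| ≤ |B|, then |dom(κ) \ {⊥}| ≤ |B|. -/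
def Nout : Set Name := {x | ∃ n, x = Name.out n}

/-- in a garbage-free graph, |dom(κ) \ {⊥}| ≤ |B|.
Here `dom` stands for dom(κ) \ {⊥} (a set of output names), `clsOf x` is the
γ-class of a name x, and the hypotheses are exactly the garbage-free and
partition invariants described in the paper. -/
theorem stmt14 {B : Type*} [Fintype B] (I : B → Name)
    (γ : Set (Set Name)) (clsOf : Name → Set Name)
    (hcls : ∀ x, clsOf x ∈ γ ∧ x ∈ clsOf x)
    (huniq : ∀ x, ∀ E ∈ γ, x ∈ E → E = clsOf x)
    (hdisj : ∀ E ∈ γ, ∀ F ∈ γ, E ≠ F → Disjoint E F)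
    (dom : Set Name)
    (hdom : dom = (Set.range I ∩ Nout) ∪
      {x | (∃ n, x = Name.out n) ∧ clsOf x ≠ {x}})
    (hinv : ∀ E ∈ γ, ∀ n : ℕ, Name.out n ∈ E → E \ {Name.out n} ⊆ Ninp)
    (hio : ∀ n : ℕ, clsOf (Name.out n) ≠ {Name.out n} →
      clsOf (Name.out n) \ {Name.out n} ⊆ Set.range I ∩ Ninp) :
    dom.ncard ≤ Fintype.card B := by
  classical
  -- g maps each element of dom to an element of range I
  set g : Name → Name := fun x => if x ∈ Set.range I then x else
    if h2 : (clsOf x \ {x}).Nonempty then h2.choose else x with hg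
  have hout : ∀ x ∈ dom, ∃ n, x = Name.out n := by
    intro x hx
    rw [hdom] at hx
    rcases hx with ⟨_, hn⟩ | ⟨hn, _⟩
    · exact hn
    · exact hn
  have hkey : ∀ x ∈ dom, x ∉ Set.range I →
      g x ∈ clsOf x \ {x} ∧ g x ∈ Set.range I ∩ Ninp := by
    intro x hx hxr
    obtain ⟨n, rfl⟩ := hout x hx
    have hcl : clsOf (Name.out n) ≠ {Name.out n} := by
      rw [hdom] at hx
      rcases hx with ⟨hr, _⟩ | ⟨_, hn⟩
      · exact absurd hr hxr
      · exact hn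
    have hne : (clsOf (Name.out n) \ {Name.out n}).Nonempty := by
      by_contra h
      rw [Set.not_nonempty_iff_eq_empty, Set.diff_eq_empty] at h
      exact hcl (le_antisymm h (by simp [(hcls (Name.out n)).2]))
    have : g (Name.out n) = hne.choose := by
      simp only [hg, if_neg hxr, dif_pos hne]
    rw [this]
    exact ⟨hne.choose_spec, hio n hcl hne.choose_spec⟩
  have geq : ∀ x ∈ Set.range I, g x = x := by
    intro x h; simp only [hg, if_pos h]
  have hinj : Set.InjOn g dom := by
    intro x hx y hy hxy
    obtain ⟨n, rfl⟩ := hout x hx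
    obtain ⟨m, rfl⟩ := hout y hy
    by_cases hxr : Name.out n ∈ Set.range I <;>
      by_cases hyr : Name.out m ∈ Set.range I
    · rw [geq _ hxr, geq _ hyr] at hxy; exact hxy
    · obtain ⟨_, _, k, hk⟩ := hkey _ hy hyr
      rw [geq _ hxr] at hxy
      exact absurd (hxy.trans hk) (by simp)
    · obtain ⟨_, _, k, hk⟩ := hkey _ hx hxr
      rw [geq _ hyr] at hxy
      exact absurd (hxy.symm.trans hk) (by simp)
    · obtain ⟨⟨hgx, _⟩, _⟩ := hkey _ hx hxr
      obtain ⟨⟨hgy, _⟩, _⟩ := hkey _ hy hyr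
      by_cases hcc : clsOf (Name.out n) = clsOf (Name.out m)
      · -- same class: both out names in class, so m's name is in Ninp, contra
        by_contra hne
        have hmem : Name.out m ∈ clsOf (Name.out n) \ {Name.out n} := by
          rw [hcc]
          refine ⟨(hcls (Name.out m)).2, ?_⟩
          simp only [Set.mem_singleton_iff]
          exact fun h => hne h.symm
        have := hinv _ (hcls (Name.out n)).1 n (hcls (Name.out n)).2 hmem
        obtain ⟨k, hk⟩ := this
        simp at hk
      · have hd := hdisj _ (hcls (Name.out n)).1 _ (hcls (Name.out m)).1 hcc
        exact absurd (hd.ne_of_mem hgx (hxy ▸ hgy)) (fun h => h rfl)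
  have himg : g '' dom ⊆ Set.range I := by
    rintro _ ⟨x, hx, rfl⟩
    by_cases hxr : x ∈ Set.range I
    · rw [geq _ hxr]; exact hxr
    · exact (hkey x hx hxr).2.1
  have hfin : (Set.range I).Finite := Set.finite_range I
  calc dom.ncard = (g '' dom).ncard := (Set.ncard_image_of_injOn hinj).symm
    _ ≤ (Set.range I).ncard := Set.ncard_le_ncard himg hfin
    _ = (I '' Set.univ).ncard := by rw [Set.image_univ]
    _ ≤ (Set.univ : Set B).ncard := Set.ncard_image_le Set.finite_univ
    _ = Fintype.card B := by rw [Set.ncard_univ, Nat.card_eq_fintype_card]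
end
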